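/- arXiv:math/0603251 — 4 statements merged into one kernel-verified Lean document; each statement's English description precedes it below -/
import Mathlib

section
/- Let a ∈ ℍⁿ be an arbitrary quaternion vector and let v ∈ ℝⁿ be a real vector with ‖v‖ = 1. Then there exist a quaternion vector u ∈ ℍⁿ with ‖u‖ = √2 and a quaternion scalar z with |z| = 1 such that for every index i we have z * (aᵢ − uᵢ * (∑ⱼ (star uⱼ) * aⱼ)) = ‖a‖ * vᵢ; that is, the left Householder matrix H = z(I − u ūᵀ) satisfies H a = ‖a‖ v (where v is regarded as a quaternion vector via the real-to-quaternion coercion). -/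
/-! The vector `b := z̄ ‖a‖ v` has the norm of `a`, and `⟨b, a⟩ = ‖a‖ z ∑ⱼ vⱼ aⱼ`; the unit
quaternion `z` is chosen to make this the nonpositive real `-‖a‖ |∑ⱼ vⱼ aⱼ|`. For two vectors of
equal norm whose inner product is real, `w := a - b` satisfies `⟨w, a⟩ = ‖w‖² / 2`, so
`u := √2 w / ‖w‖` gives `a - u ⟨u, a⟩ = b`, and then `z (a - u ⟨u, a⟩) = ‖a‖ v`. The sign of
`⟨b, a⟩` keeps `w ≠ 0` unless `a = 0`, where `u := √2 v` and `z := 1` do. -/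

open Quaternion Matrix

theorem sum_norm_sq_pos {ι E : Type*} [Fintype ι] [NormedAddCommGroup E] {x : ι → E}
    (hx : x ≠ 0) : 0 < ∑ i, ‖x i‖ ^ 2 := by
  obtain ⟨i, hi⟩ := Function.ne_iff.mp hx
  exact Finset.sum_pos' (fun j _ => sq_nonneg _) ⟨i, Finset.mem_univ i, by positivity⟩

namespace Quaternion

@[simp, norm_cast]
theorem coe_sum {ι : Type*} (s : Finset ι) (f : ι → ℝ) :
    ((∑ i ∈ s, f i : ℝ) : ℍ) = ∑ i ∈ s, (f i : ℍ) :=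
  map_sum (algebraMap ℝ ℍ) f s

variable {ι : Type*} [Fintype ι]

theorem star_dotProduct_self (x : ι → ℍ) : star x ⬝ᵥ x = ((∑ i, ‖x i‖ ^ 2 : ℝ) : ℍ) := by
  simp only [dotProduct, Pi.star_apply, star_mul_self, normSq_eq_norm_mul_self, coe_sum, sq]

theorem exists_mul_star_dotProduct_eq {a w : ι → ℍ} (hw : w ≠ 0)
    (h : star w ⬝ᵥ a = (((∑ i, ‖w i‖ ^ 2) / 2 : ℝ) : ℍ)) :
    ∃ u : ι → ℍ, ∑ i, ‖u i‖ ^ 2 = 2 ∧ ∀ i, u i * (star u ⬝ᵥ a) = w i := by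
  set N := ∑ i, ‖w i‖ ^ 2
  have hN : 0 < N := sum_norm_sq_pos hw
  set c := Real.sqrt (2 / N)
  have hc : c ^ 2 * N = 2 := by
    rw [Real.sq_sqrt (by positivity)]; field_simp
  have hu : star (c • w) ⬝ᵥ a = c • (star w ⬝ᵥ a) := by
    simp only [dotProduct, Pi.star_apply, Pi.smul_apply, Quaternion.star_smul,
      smul_mul_assoc, Finset.smul_sum]
  refine ⟨c • w, ?_, fun i => ?_⟩
  · simp only [Pi.smul_apply, norm_smul, mul_pow, Real.norm_eq_abs, sq_abs, ← Finset.mul_sum]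
    exact hc
  · rw [hu, h, Pi.smul_apply, smul_mul_smul_comm, ← coe_commutes, coe_mul_eq_smul, smul_smul,
      ← sq, ← mul_div_assoc, hc, div_self two_ne_zero, one_smul]

theorem star_sub_dotProduct_eq_half {a b : ι → ℍ} (hab : ∑ i, ‖a i‖ ^ 2 = ∑ i, ‖b i‖ ^ 2)
    {r : ℝ} (hr : star b ⬝ᵥ a = r) :
    star (a - b) ⬝ᵥ a = (((∑ i, ‖(a - b) i‖ ^ 2) / 2 : ℝ) : ℍ) := by
  have hr' : star a ⬝ᵥ b = r := by rw [star_dotProduct, hr, star_coe]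
  have hsub : star (a - b) ⬝ᵥ a = ((∑ i, ‖a i‖ ^ 2 - r : ℝ) : ℍ) := by
    rw [star_sub, sub_dotProduct, star_dotProduct_self, hr, coe_sub]
  have key : ((∑ i, ‖(a - b) i‖ ^ 2 : ℝ) : ℍ) =
      ((∑ i, ‖a i‖ ^ 2 - r : ℝ) : ℍ) + ((∑ i, ‖a i‖ ^ 2 - r : ℝ) : ℍ) := by
    rw [← star_dotProduct_self, star_sub, dotProduct_sub, sub_dotProduct, sub_dotProduct,
      star_dotProduct_self a, star_dotProduct_self b, ← hab, hr, hr', coe_sub]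
    abel
  rw [← coe_add, coe_inj] at key
  rw [hsub, key, add_self_div_two]

theorem exists_sub_mul_star_dotProduct_eq {a b : ι → ℍ} (hne : a ≠ b)
    (hab : ∑ i, ‖a i‖ ^ 2 = ∑ i, ‖b i‖ ^ 2) {r : ℝ} (hr : star b ⬝ᵥ a = r) :
    ∃ u : ι → ℍ, ∑ i, ‖u i‖ ^ 2 = 2 ∧ ∀ i, a i - u i * (star u ⬝ᵥ a) = b i := by
  obtain ⟨u, hu, hua⟩ :=
    exists_mul_star_dotProduct_eq (sub_ne_zero.mpr hne) (star_sub_dotProduct_eq_half hab hr)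
  exact ⟨u, hu, fun i => by rw [hua, Pi.sub_apply, sub_sub_cancel]⟩

theorem exists_norm_eq_one_mul_eq_norm (q : ℍ) : ∃ z : ℍ, ‖z‖ = 1 ∧ z * q = ‖q‖ := by
  rcases eq_or_ne q 0 with rfl | hq
  · exact ⟨1, norm_one, by simp⟩
  refine ⟨‖q‖ * q⁻¹, ?_, by rw [mul_assoc, inv_mul_cancel₀ hq, mul_one]⟩
  rw [norm_mul, norm_inv, norm_coe, Real.norm_of_nonneg (norm_nonneg q),
    mul_inv_cancel₀ (norm_ne_zero_iff.mpr hq)]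

theorem mul_star_eq_one_of_norm_eq_one {z : ℍ} (hz : ‖z‖ = 1) : z * star z = 1 := by
  rw [self_mul_star, normSq_eq_norm_mul_self, hz, mul_one, coe_one]

theorem exists_householder_of_ne_zero {a : ι → ℍ} (ha : a ≠ 0) {v : ι → ℝ}
    (hv : ∑ i, v i ^ 2 = 1) :
    ∃ (u : ι → ℍ) (z : ℍ), ∑ i, ‖u i‖ ^ 2 = 2 ∧ ‖z‖ = 1 ∧
      ∀ i, z * (a i - u i * (star u ⬝ᵥ a)) = ((Real.sqrt (∑ k, ‖a k‖ ^ 2) * v i : ℝ) : ℍ) := by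
  set α := Real.sqrt (∑ k, ‖a k‖ ^ 2)
  set ρ : ℍ := ∑ j, v j • a j
  obtain ⟨z, hz, hzρ⟩ := exists_norm_eq_one_mul_eq_norm (-ρ)
  rw [mul_neg, norm_neg, neg_eq_iff_eq_neg] at hzρ
  set b : ι → ℍ := fun i => (α * v i) • star z
  have hzb : ∀ i, z * b i = ((α * v i : ℝ) : ℍ) := fun i => by
    rw [mul_smul_comm, mul_star_eq_one_of_norm_eq_one hz, ← coe_mul_eq_smul, mul_one]
  have hb : ∑ i, ‖a i‖ ^ 2 = ∑ i, ‖b i‖ ^ 2 := by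
    have hbi : ∀ i, ‖b i‖ ^ 2 = α ^ 2 * v i ^ 2 := fun i => by
      simp only [b, norm_smul, Quaternion.norm_star, hz, mul_one, Real.norm_eq_abs, sq_abs,
        mul_pow]
    rw [Finset.sum_congr rfl fun i _ => hbi i, ← Finset.mul_sum, hv, mul_one,
      Real.sq_sqrt (by positivity)]
  have hba : star b ⬝ᵥ a = ((-(α * ‖ρ‖) : ℝ) : ℍ) :=
    calc star b ⬝ᵥ a = ∑ j, (α * v j) • (z * a j) := by
          simp only [dotProduct, Pi.star_apply, b, Quaternion.star_smul, star_star, smul_mul_assoc]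
      _ = α • (z * ρ) := by
          simp only [ρ, Finset.mul_sum, Finset.smul_sum, mul_smul_comm, mul_smul]
      _ = _ := by rw [hzρ, smul_neg, smul_coe, coe_neg]
  have hne : a ≠ b := by
    intro hab
    rw [← hab, star_dotProduct_self, coe_inj] at hba
    have hpos := sum_norm_sq_pos ha
    nlinarith [Real.sqrt_nonneg (∑ k, ‖a k‖ ^ 2), norm_nonneg ρ]
  obtain ⟨u, hu, hua⟩ := exists_sub_mul_star_dotProduct_eq hne hb hba
  exact ⟨u, z, hu, hz, fun i => by rw [hua, hzb]⟩

end Quaternion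

/-- **Left quaternion Householder transformation** (Theorem 1 of the paper).
Given an arbitrary quaternion vector `a` and a real unit vector `v`, there exist a
quaternion vector `u` of norm `√2` and a unit quaternion scalar `z` such that the
left Householder matrix `H = z(I - u ūᵀ)` satisfies `H a = ‖a‖ v`. -/
theorem left_quaternion_householder (n : ℕ) (a : Fin n → Quaternion ℝ) (v : Fin n → ℝ)
    (hv : Real.sqrt (∑ i, (v i) ^ 2) = 1) :
    ∃ (u : Fin n → Quaternion ℝ) (z : Quaternion ℝ),
      Real.sqrt (∑ i, ‖u i‖ ^ 2) = Real.sqrt 2 ∧ ‖z‖ = 1 ∧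
      ∀ i, z * (a i - u i * (∑ j, star (u j) * a j)) =
        ((Real.sqrt (∑ k, ‖a k‖ ^ 2) : ℝ) : Quaternion ℝ) * ((v i : ℝ) : Quaternion ℝ) := by
  have hv2 : ∑ i, v i ^ 2 = 1 := Real.sqrt_eq_one.mp hv
  rcases eq_or_ne a 0 with rfl | ha
  · refine ⟨fun i => ((Real.sqrt 2 * v i : ℝ) : ℍ), 1, ?_, norm_one, fun i => by simp⟩
    simp only [norm_coe, Real.norm_eq_abs, sq_abs, mul_pow, ← Finset.mul_sum, hv2, mul_one,
      Real.sq_sqrt zero_le_two]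
  obtain ⟨u, z, hu, hz, huz⟩ := exists_householder_of_ne_zero ha hv2
  exact ⟨u, z, by rw [hu], hz, fun i => by rw [← coe_mul, ← huz]; rfl⟩
end

section
/- Let A be an arbitrary r × c quaternion matrix with r ≤ c. Then there exist unitary quaternion matrices L ∈ ℍ^{r×r} and R ∈ ℍ^{c×c} and a real matrix B ∈ ℝ^{r×c} which is upper bidiagonal (B i j = 0 whenever j ≠ i and j ≠ i + 1, as natural-number indices) such that L * A * R equals the entrywise coercion of B into quaternion entries. -/
/-!
Golub–Kahan bidiagonalization over `ℍ`. A diagonal unit-quaternion phase followed by a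
Householder reflection `1 - 2 u uᴴ / ‖u‖²` maps any quaternion vector to a real multiple of `e₀`.
Such a map on the left clears the first column below the diagonal; one on the right, acting on
columns `1, …, c-1`, clears the first row beyond the superdiagonal and leaves both surviving
entries real. Recursing on the trailing block with right factors that fix its first column
produces a real upper bidiagonal matrix.
-/

open Matrix Quaternion

namespace Matrix

variable {α : Type*} {m n : ℕ}

/-- The block matrix `[[a, x], [y, M]]`. -/
def blockCons (a : α) (x : Fin n → α) (y : Fin m → α) (M : Matrix (Fin m) (Fin n) α) :
    Matrix (Fin (m + 1)) (Fin (n + 1)) α :=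
  of (Fin.cons (Fin.cons a x) fun i => Fin.cons (y i) (M i))

lemma blockCons_eta (A : Matrix (Fin (m + 1)) (Fin (n + 1)) α) :
    blockCons (A 0 0) (fun j => A 0 j.succ) (fun i => A i.succ 0) (A.submatrix Fin.succ Fin.succ)
      = A := by
  ext i j
  cases i using Fin.cases <;> cases j using Fin.cases <;> rfl

lemma map_blockCons {β : Type*} (f : α → β) (a : α) (x : Fin n → α) (y : Fin m → α)
    (M : Matrix (Fin m) (Fin n) α) :
    (blockCons a x y M).map f = blockCons (f a) (f ∘ x) (f ∘ y) (M.map f) := by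
  ext i j
  cases i using Fin.cases <;> cases j using Fin.cases <;> rfl

lemma conjTranspose_blockCons [Star α] (a : α) (x : Fin n → α) (y : Fin m → α)
    (M : Matrix (Fin m) (Fin n) α) :
    (blockCons a x y M)ᴴ = blockCons (star a) (star y) (star x) Mᴴ := by
  ext i j
  cases i using Fin.cases <;> cases j using Fin.cases <;> rfl

section Semiring

variable [Semiring α]

lemma blockCons_one_zero_zero_one : blockCons 1 0 0 (1 : Matrix (Fin n) (Fin n) α) = 1 := by
  ext i j
  cases i using Fin.cases <;> cases j using Fin.cases <;>
    simp [blockCons, one_apply, Fin.succ_ne_zero, (Fin.succ_ne_zero _).symm]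

lemma blockCons_mul_blockCons_one (a : α) (x : Fin n → α) (y : Fin m → α)
    (M : Matrix (Fin m) (Fin n) α) (N : Matrix (Fin n) (Fin n) α) :
    blockCons a x y M * blockCons 1 0 0 N = blockCons a (x ᵥ* N) y (M * N) := by
  ext i j
  cases i using Fin.cases <;> cases j using Fin.cases <;>
    simp [blockCons, mul_apply, Fin.sum_univ_succ, vecMul, dotProduct]

lemma blockCons_one_mul_blockCons (a : α) (x : Fin n → α) (y : Fin m → α)
    (M : Matrix (Fin m) (Fin n) α) (N : Matrix (Fin m) (Fin m) α) :
    blockCons 1 0 0 N * blockCons a x y M = blockCons a x (N *ᵥ y) (N * M) := by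
  ext i j
  cases i using Fin.cases <;> cases j using Fin.cases <;>
    simp [blockCons, mul_apply, Fin.sum_univ_succ, mulVec, dotProduct]

lemma blockCons_one_mul (M N : Matrix (Fin n) (Fin n) α) :
    blockCons 1 0 0 (M * N) = blockCons 1 0 0 M * blockCons 1 0 0 N := by
  rw [blockCons_mul_blockCons_one, zero_vecMul]

lemma single_zero_vecMul_blockCons_one (b : α) (N : Matrix (Fin n) (Fin n) α) :
    Pi.single 0 b ᵥ* blockCons 1 0 0 N = Pi.single 0 b := by
  ext j
  cases j using Fin.cases <;> simp [blockCons]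

lemma blockCons_one_mem_unitary [StarRing α] {N : Matrix (Fin n) (Fin n) α}
    (hN : N ∈ unitary (Matrix (Fin n) (Fin n) α)) :
    blockCons 1 0 0 N ∈ unitary (Matrix (Fin (n + 1)) (Fin (n + 1)) α) := by
  have key (P Q : Matrix (Fin n) (Fin n) α) (h : P * Q = 1) :
      blockCons 1 0 0 P * blockCons 1 0 0 Q = 1 := by
    rw [← blockCons_one_mul, h, blockCons_one_zero_zero_one]
  rw [Unitary.mem_iff, star_eq_conjTranspose] at hN ⊢
  rw [conjTranspose_blockCons, star_one, star_zero]
  exact ⟨key _ _ hN.1, key _ _ hN.2⟩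

end Semiring

def IsUpperBidiagonal [Zero α] (B : Matrix (Fin m) (Fin n) α) : Prop :=
  ∀ (i : Fin m) (j : Fin n), (j : ℕ) ≠ i → (j : ℕ) ≠ i + 1 → B i j = 0

lemma IsUpperBidiagonal.blockCons [Zero α] {B : Matrix (Fin m) (Fin n) α}
    (hB : B.IsUpperBidiagonal) (a : α) {x : Fin n → α} (hx : ∀ j : Fin n, (j : ℕ) ≠ 0 → x j = 0) :
    (blockCons a x 0 B).IsUpperBidiagonal := by
  intro i j
  cases i using Fin.cases <;> cases j using Fin.cases
  · simp
  · simpa [Matrix.blockCons] using hx _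
  · exact fun _ _ => rfl
  · simpa [Matrix.blockCons] using hB _ _

lemma diagonal_mem_unitary {ι : Type*} [Semiring α] [StarRing α] [Fintype ι] [DecidableEq ι]
    {d : ι → α} (hd : ∀ i, d i ∈ unitary α) : diagonal d ∈ unitary (Matrix ι ι α) := by
  simp only [Unitary.mem_iff, star_eq_conjTranspose, diagonal_conjTranspose,
    diagonal_mul_diagonal] at hd ⊢
  exact ⟨(congrArg diagonal (funext fun i => (hd i).1)).trans diagonal_one,
    (congrArg diagonal (funext fun i => (hd i).2)).trans diagonal_one⟩

end Matrix

namespace Quaternion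

instance : StarModule ℝ ℍ := ⟨star_smul⟩

lemma exists_mem_unitary_mul_eq_norm (q : ℍ) : ∃ p ∈ unitary ℍ, p * q = (‖q‖ : ℍ) := by
  rcases eq_or_ne q 0 with rfl | hq
  · exact ⟨1, one_mem _, by simp⟩
  have hnorm : ‖q‖ ≠ 0 := norm_ne_zero_iff.mpr hq
  have hinv : ‖q‖⁻¹ * ‖q‖⁻¹ * (‖q‖ * ‖q‖) = 1 := by field_simp
  refine ⟨‖q‖⁻¹ • star q, ?_, ?_⟩
  · rw [Unitary.mem_iff, star_smul, star_star, smul_mul_smul_comm, smul_mul_smul_comm,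
      self_mul_star, star_mul_self, smul_coe, normSq_eq_norm_mul_self, hinv, coe_one]
    exact ⟨rfl, rfl⟩
  · rw [smul_mul_assoc, star_mul_self, smul_coe, normSq_eq_norm_mul_self]
    congr 1
    field_simp

section Householder

variable {n : Type*} [Fintype n]

lemma star_dotProduct_self_s4 (u : n → ℍ) : star u ⬝ᵥ u = ((∑ i, normSq (u i) : ℝ) : ℍ) := by
  rw [← algebraMap_def, map_sum]
  exact Finset.sum_congr rfl fun i _ => star_mul_self (u i)

lemma eq_zero_of_sum_normSq_eq_zero {u : n → ℍ} (h : ∑ i, normSq (u i) = 0) : u = 0 := by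
  funext i
  exact normSq_eq_zero.mp
    ((Finset.sum_eq_zero_iff_of_nonneg fun i _ => normSq_nonneg).mp h i (Finset.mem_univ i))

variable [DecidableEq n]

/-- For `u = 0` the coefficient is `2 / 0 = 0`, so `householder 0 = 1`; this is why
`householder_sub_mulVec` needs no hypothesis `v ≠ w`. -/
noncomputable def householder (u : n → ℍ) : Matrix n n ℍ :=
  1 - (2 / ∑ i, normSq (u i)) • vecMulVec u (star u)

lemma householder_conjTranspose (u : n → ℍ) : (householder u)ᴴ = householder u := by
  simp [householder]

lemma householder_mul_self (u : n → ℍ) : householder u * householder u = 1 := by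
  rw [householder]
  set s := ∑ i, normSq (u i)
  have hsq : vecMulVec u (star u) * vecMulVec u (star u) = s • vecMulVec u (star u) := by
    rw [vecMulVec_mul_vecMulVec, star_dotProduct_self_s4, ← algebraMap_def, algebraMap_smul,
      vecMulVec_smul]
  have hc : (2 / s) * (2 / s) * s = 2 / s + 2 / s := by
    rcases eq_or_ne s 0 with h | h
    · simp [h]
    · field_simp; ring
  simp only [sub_mul, mul_sub, one_mul, mul_one, smul_mul_smul, hsq, smul_smul, hc, add_smul]
  abel

lemma householder_mem_unitary (u : n → ℍ) : householder u ∈ unitary (Matrix n n ℍ) := by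
  rw [Unitary.mem_iff, star_eq_conjTranspose, householder_conjTranspose, householder_mul_self]
  exact ⟨rfl, rfl⟩

lemma householder_sub_mulVec {v w : n → ℍ} (h₁ : star v ⬝ᵥ v = star w ⬝ᵥ w)
    (h₂ : star w ⬝ᵥ v = star v ⬝ᵥ w) : householder (v - w) *ᵥ v = w := by
  set u := v - w
  set s := ∑ i, normSq (u i)
  have hs : star u ⬝ᵥ v = ((s / 2 : ℝ) : ℍ) := by
    have hs2 : ((s : ℝ) : ℍ) = 2 * (star u ⬝ᵥ v) := by
      rw [← star_dotProduct_self_s4]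
      simp only [u, star_sub, sub_dotProduct, dotProduct_sub, h₁, h₂]
      noncomm_ring
    calc star u ⬝ᵥ v = ((2⁻¹ : ℝ) : ℍ) * (2 * (star u ⬝ᵥ v)) := by
          rw [← mul_assoc, show (2 : ℍ) = ((2 : ℝ) : ℍ) by norm_cast, ← coe_mul,
            inv_mul_cancel₀ two_ne_zero, coe_one, one_mul]
      _ = ((s / 2 : ℝ) : ℍ) := by rw [← hs2, ← coe_mul, inv_mul_eq_div]
  have hmul : householder u *ᵥ v = v - ((2 / s) * (s / 2)) • u := by
    rw [householder, sub_mulVec, one_mulVec, smul_mulVec, vecMulVec_mulVec, hs, mul_smul]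
    congr 2
    funext i
    exact mul_coe_eq_smul _ _
  rcases eq_or_ne s 0 with h | h
  · have hu : u = 0 := eq_zero_of_sum_normSq_eq_zero h
    rw [hmul, hu, smul_zero, sub_zero]
    exact sub_eq_zero.mp hu
  · have hc : 2 / s * (s / 2) = 1 := by field_simp
    rw [hmul, hc, one_smul, sub_sub_cancel]

end Householder

lemma exists_unitary_mulVec_eq_single {n : ℕ} (v : Fin (n + 1) → ℍ) :
    ∃ U ∈ unitary (Matrix (Fin (n + 1)) (Fin (n + 1)) ℍ), ∃ β : ℝ,
      U *ᵥ v = Pi.single 0 (β : ℍ) := by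
  -- The phase `D` makes the leading entry real, so that `star w ⬝ᵥ v' = star v' ⬝ᵥ w` below.
  obtain ⟨p, hp, hpv⟩ := exists_mem_unitary_mul_eq_norm (v 0)
  set D := diagonal (Function.update (1 : Fin (n + 1) → ℍ) 0 p)
  have hD : D ∈ unitary (Matrix (Fin (n + 1)) (Fin (n + 1)) ℍ) := by
    refine diagonal_mem_unitary fun i => ?_
    rcases eq_or_ne i 0 with rfl | hi
    · simpa using hp
    · simp [Function.update_of_ne hi]
  set v' := D *ᵥ v
  have hv' : v' 0 = (‖v 0‖ : ℍ) := by simp [v', D, mulVec_diagonal, hpv]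
  set β := √(∑ i, normSq (v' i))
  set w : Fin (n + 1) → ℍ := Pi.single 0 (β : ℍ)
  have h₁ : star v' ⬝ᵥ v' = star w ⬝ᵥ w := by
    rw [star_dotProduct_self_s4, ← Pi.single_star, single_dotProduct, star_coe,
      show w 0 = β from Pi.single_eq_same _ _,
      ← coe_mul, Real.mul_self_sqrt (Finset.sum_nonneg fun i _ => normSq_nonneg)]
  have h₂ : star w ⬝ᵥ v' = star v' ⬝ᵥ w := by
    rw [← Pi.single_star, single_dotProduct, dotProduct_single, Pi.star_apply, hv', star_coe,
      star_coe, coe_commutes]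
  refine ⟨householder (v' - w) * D, mul_mem (householder_mem_unitary _) hD, β, ?_⟩
  rw [← mulVec_mulVec, householder_sub_mulVec h₁ h₂]

lemma exists_unitary_vecMul_eq_single {n : ℕ} (x : Fin (n + 1) → ℍ) :
    ∃ W ∈ unitary (Matrix (Fin (n + 1)) (Fin (n + 1)) ℍ), ∃ γ : ℝ,
      x ᵥ* W = Pi.single 0 (γ : ℍ) := by
  obtain ⟨U, hU, β, hUx⟩ := exists_unitary_mulVec_eq_single (star x)
  refine ⟨star U, Unitary.star_mem hU, β, ?_⟩
  rw [star_eq_conjTranspose, vecMul_conjTranspose, hUx, ← Pi.single_star, star_coe]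

lemma exists_unitary_mul_eq_blockCons {r c : ℕ} (A : Matrix (Fin (r + 1)) (Fin (c + 1)) ℍ) :
    ∃ U ∈ unitary (Matrix (Fin (r + 1)) (Fin (r + 1)) ℍ), ∃ (β : ℝ) (x : Fin c → ℍ)
      (S : Matrix (Fin r) (Fin c) ℍ), U * A = blockCons (β : ℍ) x 0 S := by
  obtain ⟨U, hU, β, hUA⟩ := exists_unitary_mulVec_eq_single fun i => A i 0
  have hcol (i : Fin (r + 1)) : (U * A) i 0 = (Pi.single 0 (β : ℍ) : Fin (r + 1) → ℍ) i :=
    congrFun hUA i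
  refine ⟨U, hU, β, fun j => (U * A) 0 j.succ, (U * A).submatrix Fin.succ Fin.succ,
    (blockCons_eta (U * A)).symm.trans ?_⟩
  congr 1
  · simpa using hcol 0
  · funext i
    simpa [Fin.succ_ne_zero] using hcol i.succ

/-- The right factor has the form `blockCons 1 0 0 R` so that, one level up, it leaves the row
`(β, γ, 0, …)` produced there unchanged. -/
theorem exists_unitary_mul_mul_blockCons_eq_upperBidiagonal (r c : ℕ)
    (A : Matrix (Fin r) (Fin (c + 1)) ℍ) :
    ∃ L ∈ unitary (Matrix (Fin r) (Fin r) ℍ), ∃ R ∈ unitary (Matrix (Fin c) (Fin c) ℍ),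
      ∃ B : Matrix (Fin r) (Fin (c + 1)) ℝ, B.IsUpperBidiagonal ∧
        L * A * blockCons 1 0 0 R = B.map (↑) := by
  induction r generalizing c with
  | zero => exact ⟨1, one_mem _, 1, one_mem _, 0, fun i => i.elim0, Subsingleton.elim _ _⟩
  | succ r ih =>
    obtain ⟨U, hU, β, x, S, hUA⟩ := exists_unitary_mul_eq_blockCons A
    cases c with
    | zero =>
      refine ⟨U, hU, 1, one_mem _, blockCons β 0 0 0,
        IsUpperBidiagonal.blockCons (fun _ _ _ _ => rfl) β fun j => j.elim0, ?_⟩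
      rw [blockCons_one_zero_zero_one, Matrix.mul_one, hUA, map_blockCons]
      congr 1 <;> exact Subsingleton.elim _ _
    | succ c =>
      obtain ⟨W, hW, γ, hxW⟩ := exists_unitary_vecMul_eq_single x
      obtain ⟨L, hL, R, hR, B, hB, hLR⟩ := ih c (S * W)
      refine ⟨blockCons 1 0 0 L * U, mul_mem (blockCons_one_mem_unitary hL) hU,
        W * blockCons 1 0 0 R, mul_mem hW (blockCons_one_mem_unitary hR),
        blockCons β (Pi.single 0 γ) 0 B,
        hB.blockCons β fun j hj => Pi.single_eq_of_ne (Fin.val_ne_iff.mp hj) _, ?_⟩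
      calc blockCons 1 0 0 L * U * A * blockCons 1 0 0 (W * blockCons 1 0 0 R)
          = blockCons 1 0 0 L * (U * A * blockCons 1 0 0 W) *
              blockCons 1 0 0 (blockCons 1 0 0 R) := by
            rw [blockCons_one_mul]; simp only [Matrix.mul_assoc]
        _ = blockCons 1 0 0 L * blockCons (β : ℍ) (Pi.single 0 (γ : ℍ)) 0 (S * W) *
              blockCons 1 0 0 (blockCons 1 0 0 R) := by
            rw [hUA, blockCons_mul_blockCons_one, hxW]
        _ = blockCons (β : ℍ) (Pi.single 0 (γ : ℍ)) 0 (L * (S * W) * blockCons 1 0 0 R) := by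
            rw [blockCons_one_mul_blockCons, blockCons_mul_blockCons_one,
              single_zero_vecMul_blockCons_one, mulVec_zero]
        _ = _ := by
            rw [hLR, map_blockCons]
            congr
            exact Pi.single_op (fun _ => ((↑) : ℝ → ℍ)) (fun _ => coe_zero) 0 γ

theorem exists_unitary_mul_mul_eq_upperBidiagonal (r c : ℕ) (A : Matrix (Fin r) (Fin c) ℍ) :
    ∃ L ∈ unitary (Matrix (Fin r) (Fin r) ℍ), ∃ R ∈ unitary (Matrix (Fin c) (Fin c) ℍ),
      ∃ B : Matrix (Fin r) (Fin c) ℝ, B.IsUpperBidiagonal ∧ L * A * R = B.map (↑) := by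
  cases c with
  | zero => exact ⟨1, one_mem _, 1, one_mem _, 0, fun _ _ _ _ => rfl, Subsingleton.elim _ _⟩
  | succ c =>
    obtain ⟨L, hL, R, hR, B, hB, h⟩ := exists_unitary_mul_mul_blockCons_eq_upperBidiagonal r c A
    exact ⟨L, hL, _, blockCons_one_mem_unitary hR, B, hB, h⟩

end Quaternion

theorem quaternion_upper_bidiagonalization_general (r c : ℕ)
    (A : Matrix (Fin r) (Fin c) (Quaternion ℝ)) :
    ∃ (L : Matrix (Fin r) (Fin r) (Quaternion ℝ))
      (R : Matrix (Fin c) (Fin c) (Quaternion ℝ))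
      (B : Matrix (Fin r) (Fin c) ℝ),
      L * Lᴴ = 1 ∧ Lᴴ * L = 1 ∧ R * Rᴴ = 1 ∧ Rᴴ * R = 1 ∧
      (∀ (i : Fin r) (j : Fin c), (j : ℕ) ≠ (i : ℕ) → (j : ℕ) ≠ (i : ℕ) + 1 → B i j = 0) ∧
      L * A * R = B.map (fun x : ℝ => ((x : ℝ) : Quaternion ℝ)) := by
  obtain ⟨L, hL, R, hR, B, hB, hLAR⟩ := Quaternion.exists_unitary_mul_mul_eq_upperBidiagonal r c A
  rw [Unitary.mem_iff, star_eq_conjTranspose] at hL hR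
  exact ⟨L, R, B, hL.2, hL.1, hR.2, hR.1, hB, hLAR⟩

/-- **Real upper-bidiagonalization of a quaternion matrix** (Theorem 3 of the paper,
case `r ≤ c`): every `r × c` quaternion matrix `A` with `r ≤ c` can be transformed by
unitary quaternion matrices `L` and `R` into a *real* upper bidiagonal matrix `B`, i.e.
`L A R = B`. -/
theorem quaternion_upper_bidiagonalization (r c : ℕ) (hrc : r ≤ c)
    (A : Matrix (Fin r) (Fin c) (Quaternion ℝ)) :
    ∃ (L : Matrix (Fin r) (Fin r) (Quaternion ℝ))
      (R : Matrix (Fin c) (Fin c) (Quaternion ℝ))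
      (B : Matrix (Fin r) (Fin c) ℝ),
      L * Lᴴ = 1 ∧ Lᴴ * L = 1 ∧ R * Rᴴ = 1 ∧ Rᴴ * R = 1 ∧
      (∀ (i : Fin r) (j : Fin c), (j : ℕ) ≠ (i : ℕ) → (j : ℕ) ≠ (i : ℕ) + 1 → B i j = 0) ∧
      L * A * R = B.map (fun x : ℝ => ((x : ℝ) : Quaternion ℝ)) :=
  quaternion_upper_bidiagonalization_general r c A
end

section
/- Let A be an arbitrary r × c quaternion matrix with c ≤ r. Then there exist unitary quaternion matrices L ∈ ℍ^{r×r} and R ∈ ℍ^{c×c} and a real matrix B ∈ ℝ^{r×c} which is lower bidiagonal (B i j = 0 whenever i ≠ j and i ≠ j + 1, as natural-number indices) such that L * A * R equals the entrywise coercion of B into quaternion entries. -/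
open Matrix

section Aux
set_option maxHeartbeats 1000000
open Matrix Finset
noncomputable section
local notation "ℍ" => Quaternion ℝ
open Quaternion (normSq)

noncomputable instance : StarModule ℝ ℍ := ⟨fun r x => by ext <;> simp⟩

lemma coeSum {α : Type*} (s : Finset α) (f : α → ℝ) :
    ((∑ i ∈ s, f i : ℝ) : ℍ) = ∑ i ∈ s, ((f i : ℝ) : ℍ) := by
  simp only [← Quaternion.algebraMap_def]
  exact map_sum (algebraMap ℝ ℍ) f s

lemma householder_col {n : ℕ} (v : Fin n → ℍ) :
    ∃ (U : Matrix (Fin n) (Fin n) ℍ) (t : ℝ), U * Uᴴ = 1 ∧ Uᴴ * U = 1 ∧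
      U *ᵥ v = fun i : Fin n => if (i : ℕ) = 0 then ((t : ℝ) : ℍ) else 0 := by
  classical
  cases n with
  | zero => exact ⟨1, 0, by simp, by simp, funext fun i => i.elim0⟩
  | succ m =>
  set a : ℝ := ‖v 0‖ with ha
  set q : ℍ := if v 0 = 0 then 1 else ((a : ℝ) : ℍ) * (v 0)⁻¹ with hqdef
  have hnormSq0 : ((normSq (v 0) : ℝ) : ℍ) = ((a : ℝ):ℍ) * ((a : ℝ):ℍ) := by
    rw [Quaternion.normSq_eq_norm_mul_self]; push_cast; rfl
  have hq3 : q * v 0 = ((a : ℝ) : ℍ) := by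
    by_cases h : v 0 = 0
    · simp [hqdef, h, ha]
    · rw [hqdef, if_neg h, mul_assoc, inv_mul_cancel₀ h, mul_one]
  have hq1 : star q * q = 1 := by
    by_cases h : v 0 = 0
    · simp [hqdef, h]
    · have hs : star (v 0) ≠ 0 := star_ne_zero.2 h
      rw [hqdef, if_neg h, StarMul.star_mul, star_inv₀, Quaternion.star_coe]
      calc (star (v 0))⁻¹ * ((a:ℝ):ℍ) * (((a:ℝ):ℍ) * (v 0)⁻¹)
          = (star (v 0))⁻¹ * (((a:ℝ):ℍ) * ((a:ℝ):ℍ)) * (v 0)⁻¹ := by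
            simp [mul_assoc]
        _ = (star (v 0))⁻¹ * (star (v 0) * v 0) * (v 0)⁻¹ := by
            rw [← hnormSq0, Quaternion.star_mul_self]
        _ = 1 := by
            rw [← mul_assoc, inv_mul_cancel₀ hs, one_mul, mul_inv_cancel₀ h]
  have hq2 : q * star q = 1 := by
    have hq0 : q ≠ 0 := by
      intro h0
      rw [h0, star_zero, zero_mul] at hq1
      exact one_ne_zero hq1.symm
    have h2 := congrArg (fun x : ℍ => q * x * q⁻¹) hq1
    simp only [mul_one] at h2
    rw [show q * (star q * q) * q⁻¹ = q * star q from by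
          rw [← mul_assoc, mul_assoc (q * star q), mul_inv_cancel₀ hq0, mul_one],
        mul_inv_cancel₀ hq0] at h2
    exact h2
  set D : Matrix (Fin (m+1)) (Fin (m+1)) ℍ := diagonal (fun i => if i = 0 then q else 1) with hD
  have hD1 : D * Dᴴ = 1 := by
    rw [hD, diagonal_conjTranspose, diagonal_mul_diagonal, ← diagonal_one]
    refine congrArg _ (funext fun i => ?_)
    by_cases h : i = 0 <;> simp [h, Pi.star_apply, hq2]
  have hD2 : Dᴴ * D = 1 := by
    rw [hD, diagonal_conjTranspose, diagonal_mul_diagonal, ← diagonal_one]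
    refine congrArg _ (funext fun i => ?_)
    by_cases h : i = 0 <;> simp [h, Pi.star_apply, hq1]
  set v' : Fin (m+1) → ℍ := fun i => (if i = 0 then q else 1) * v i with hv'
  have hDv : D *ᵥ v = v' := by
    funext i; rw [hD, mulVec_diagonal]
  have hv'0 : v' 0 = ((a : ℝ) : ℍ) := by simpa [hv'] using hq3
  -- Step 2: Householder reflection.
  set S : ℝ := ∑ i, normSq (v' i) with hS
  have hS0 : 0 ≤ S := Finset.sum_nonneg fun i _ => Quaternion.normSq_nonneg
  set N : ℝ := Real.sqrt S with hN
  have hNN : N * N = S := Real.mul_self_sqrt hS0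
  set w : Fin (m+1) → ℍ := fun i => v' i - if i = 0 then ((N:ℝ):ℍ) else 0 with hw
  by_cases hw0 : w = 0
  · refine ⟨D, N, hD1, hD2, ?_⟩
    rw [hDv]
    funext i
    have hi := congrFun hw0 i
    simp only [hw, Pi.zero_apply, sub_eq_zero] at hi
    rw [hi]
    by_cases h : i = 0
    · simp [h]
    · rw [if_neg h, if_neg (fun hc => h (Fin.ext (by simpa using hc)))]
  · set s : ℝ := ∑ i, normSq (w i) with hs
    have hs0 : 0 < s := by
      obtain ⟨i, hi⟩ := Function.ne_iff.mp hw0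
      refine Finset.sum_pos' (fun j _ => Quaternion.normSq_nonneg) ⟨i, Finset.mem_univ i, ?_⟩
      have := Quaternion.normSq_ne_zero.mpr hi
      exact lt_of_le_of_ne Quaternion.normSq_nonneg (Ne.symm this)
    have hw_succ : ∀ i : Fin m, w i.succ = v' i.succ := by
      intro i; simp [hw, Fin.succ_ne_zero]
    have hw_zero : w 0 = ((a - N : ℝ) : ℍ) := by
      simp only [hw, hv'0, if_pos rfl]
      push_cast; ring
    have hSsucc : ∑ i : Fin m, normSq (v' i.succ) = S - a^2 := by
      have : S = normSq (v' 0) + ∑ i : Fin m, normSq (v' i.succ) := Fin.sum_univ_succ _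
      rw [hv'0, Quaternion.normSq_coe] at this
      linarith
    have hs_eq : s = 2*S - 2*N*a := by
      have h1 : s = normSq (w 0) + ∑ i : Fin m, normSq (w i.succ) := Fin.sum_univ_succ _
      rw [hw_zero, Quaternion.normSq_coe] at h1
      have h2 : ∑ i : Fin m, normSq (w i.succ) = ∑ i : Fin m, normSq (v' i.succ) :=
        Finset.sum_congr rfl fun i _ => by rw [hw_succ]
      rw [h2, hSsucc] at h1
      nlinarith [hNN]
    have key2 : ∑ i, star (w i) * v' i = (((s/2 : ℝ)) : ℍ) := by
      have h1 : ∑ i, star (w i) * v' i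
          = star (w 0) * v' 0 + ∑ i : Fin m, star (w i.succ) * v' i.succ :=
        Fin.sum_univ_succ _
      have h2 : ∑ i : Fin m, star (w i.succ) * v' i.succ
          = ((S - a^2 : ℝ) : ℍ) := by
        have h3 : ∑ i : Fin m, star (w i.succ) * v' i.succ
            = ∑ i : Fin m, ((normSq (v' i.succ) : ℝ) : ℍ) :=
          Finset.sum_congr rfl fun i _ => by rw [hw_succ, Quaternion.star_mul_self]
        rw [h3, ← hSsucc, coeSum]
      rw [h1, h2, hw_zero, hv'0, Quaternion.star_coe, ← Quaternion.coe_mul, ← Quaternion.coe_add]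
      have : (a - N) * a + (S - a^2) = s/2 := by nlinarith [hs_eq]
      rw [this]
    have key1 : ∑ i, star (w i) * w i = ((s : ℝ) : ℍ) := by
      simp only [Quaternion.star_mul_self]
      rw [hs, coeSum]
    set c : ℝ := 2/s with hc
    set P : Matrix (Fin (m+1)) (Fin (m+1)) ℍ := Matrix.of fun i j => w i * star (w j) with hP
    have hPH : Pᴴ = P := by
      refine Matrix.ext fun i j => ?_
      simp only [conjTranspose_apply, hP, Matrix.of_apply, StarMul.star_mul, star_star]
    have hPP : P * P = s • P := by
      refine Matrix.ext fun i j => ?_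
      simp only [mul_apply, hP, Matrix.of_apply, Matrix.smul_apply]
      calc ∑ k, w i * star (w k) * (w k * star (w j))
          = w i * ((∑ k, star (w k) * w k) * star (w j)) := by
            rw [Finset.sum_mul, Finset.mul_sum]
            exact Finset.sum_congr rfl fun k _ => by simp only [mul_assoc]
        _ = s • (w i * star (w j)) := by
            rw [key1, Quaternion.coe_mul_eq_smul, mul_smul_comm]
    set Hm : Matrix (Fin (m+1)) (Fin (m+1)) ℍ := 1 - c • P with hH
    have hHH : Hmᴴ = Hm := by
      rw [hH, conjTranspose_sub, conjTranspose_smul, conjTranspose_one, hPH, star_trivial]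
    have hHmul : Hm * Hm = 1 := by
      have hcs : c * (c * s) = c + c := by
        rw [hc]; field_simp; ring
      rw [hH]
      simp only [mul_sub, sub_mul, one_mul, mul_one, smul_mul_assoc, mul_smul_comm, hPP,
        smul_smul, smul_sub]
      rw [hcs, add_smul]
      abel
    have hHv : Hm *ᵥ v' = fun i => if i = 0 then ((N:ℝ):ℍ) else 0 := by
      funext i
      have hPv : (P *ᵥ v') i = w i * (((s/2 : ℝ)) : ℍ) := by
        calc (P *ᵥ v') i = ∑ j, P i j * v' j := rfl
          _ = w i * ∑ j, star (w j) * v' j := by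
              rw [Finset.mul_sum]
              exact Finset.sum_congr rfl fun j _ => by rw [hP, Matrix.of_apply, mul_assoc]
          _ = w i * (((s/2 : ℝ)) : ℍ) := by rw [key2]
      have hsub : (Hm *ᵥ v') i = v' i - c • (w i * (((s/2 : ℝ)) : ℍ)) := by
        rw [hH, sub_mulVec, one_mulVec, smul_mulVec, Pi.sub_apply, Pi.smul_apply, hPv]
      rw [hsub, ← mul_smul_comm, ← Quaternion.coe_mul_eq_smul, ← Quaternion.coe_mul]
      have hc1 : c * (s/2) = 1 := by
        rw [hc]; field_simp
      rw [hc1, Quaternion.coe_one, mul_one, hw, sub_sub_cancel]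
    refine ⟨Hm * D, N, ?_, ?_, ?_⟩
    · rw [conjTranspose_mul, hHH, mul_assoc, ← mul_assoc D, hD1, one_mul, hHmul]
    · rw [conjTranspose_mul, hHH, mul_assoc, ← mul_assoc Hm, hHmul, one_mul, hD2]
    · rw [← mulVec_mulVec, hDv, hHv]
      funext i
      by_cases h : i = 0
      · simp [h]
      · rw [if_neg h, if_neg]
        intro hc'
        exact h (Fin.ext (by simpa using hc'))

lemma householder_row {n : ℕ} (a : Fin n → ℍ) :
    ∃ (V : Matrix (Fin n) (Fin n) ℍ) (t : ℝ), V * Vᴴ = 1 ∧ Vᴴ * V = 1 ∧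
      a ᵥ* V = fun j : Fin n => if (j : ℕ) = 0 then ((t : ℝ) : ℍ) else 0 := by
  obtain ⟨U, t, hU1, hU2, hU3⟩ := householder_col (fun i => star (a i))
  refine ⟨Uᴴ, t, by rw [conjTranspose_conjTranspose, hU2], by rw [conjTranspose_conjTranspose, hU1], ?_⟩
  funext j
  have h := congrFun hU3 j
  simp only [mulVec, dotProduct] at h
  have h2 : (a ᵥ* Uᴴ) j = star ((fun k => U j k * star (a k)) |> fun f => ∑ k, f k) := by
    simp only [vecMul, dotProduct, conjTranspose_apply, star_sum, StarMul.star_mul, star_star]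
  rw [h2]
  simp only [h]
  split_ifs <;> simp


def embed1 {n m : ℕ} (M : Matrix (Fin n) (Fin m) ℍ) :
    Matrix (Fin (n+1)) (Fin (m+1)) ℍ :=
  Matrix.of fun i j =>
    Fin.cases (Fin.cases 1 (fun _ => 0) j)
      (fun i' => Fin.cases 0 (fun j' => M i' j') j) i

@[simp] lemma embed1_zero_zero {n m} (M : Matrix (Fin n) (Fin m) ℍ) :
    embed1 M 0 0 = 1 := rfl
@[simp] lemma embed1_zero_succ {n m} (M : Matrix (Fin n) (Fin m) ℍ) (j : Fin m) :
    embed1 M 0 j.succ = 0 := rfl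
@[simp] lemma embed1_succ_zero {n m} (M : Matrix (Fin n) (Fin m) ℍ) (i : Fin n) :
    embed1 M i.succ 0 = 0 := rfl
@[simp] lemma embed1_succ_succ {n m} (M : Matrix (Fin n) (Fin m) ℍ) (i : Fin n) (j : Fin m) :
    embed1 M i.succ j.succ = M i j := rfl

lemma embed1_conjTranspose {n m} (M : Matrix (Fin n) (Fin m) ℍ) :
    (embed1 M)ᴴ = embed1 Mᴴ := by
  refine Matrix.ext fun i j => ?_
  refine Fin.cases ?_ (fun i' => ?_) i <;> refine Fin.cases ?_ (fun j' => ?_) j <;>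
    simp [conjTranspose_apply]

lemma embed1_mul {n m k} (M : Matrix (Fin n) (Fin m) ℍ) (N : Matrix (Fin m) (Fin k) ℍ) :
    embed1 M * embed1 N = embed1 (M * N) := by
  refine Matrix.ext fun i j => ?_
  refine Fin.cases ?_ (fun i' => ?_) i <;> refine Fin.cases ?_ (fun j' => ?_) j <;>
    simp [mul_apply, Fin.sum_univ_succ]

lemma embed1_one {n} : embed1 (1 : Matrix (Fin n) (Fin n) ℍ) = 1 := by
  refine Matrix.ext fun i j => ?_
  refine Fin.cases ?_ (fun i' => ?_) i <;> refine Fin.cases ?_ (fun j' => ?_) j <;>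
    simp [one_apply, Fin.succ_ne_zero, (Fin.succ_ne_zero _).symm, Fin.succ_inj]

lemma mul_embed1_left_zero {n m : ℕ} (M : Matrix (Fin n) (Fin n) ℍ)
    (A : Matrix (Fin (n+1)) (Fin m) ℍ) (j : Fin m) :
    (embed1 M * A) 0 j = A 0 j := by
  simp [mul_apply, Fin.sum_univ_succ]

lemma mul_embed1_left_succ {n m : ℕ} (M : Matrix (Fin n) (Fin n) ℍ)
    (A : Matrix (Fin (n+1)) (Fin m) ℍ) (i : Fin n) (j : Fin m) :
    (embed1 M * A) i.succ j = ∑ k, M i k * A k.succ j := by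
  simp [mul_apply, Fin.sum_univ_succ]

lemma mul_embed1_right_zero {n m : ℕ} (M : Matrix (Fin m) (Fin m) ℍ)
    (A : Matrix (Fin n) (Fin (m+1)) ℍ) (i : Fin n) :
    (A * embed1 M) i 0 = A i 0 := by
  simp [mul_apply, Fin.sum_univ_succ]

lemma mul_embed1_right_succ {n m : ℕ} (M : Matrix (Fin m) (Fin m) ℍ)
    (A : Matrix (Fin n) (Fin (m+1)) ℍ) (i : Fin n) (j : Fin m) :
    (A * embed1 M) i j.succ = ∑ k, A i k.succ * M k j := by
  simp [mul_apply, Fin.sum_univ_succ]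

theorem bidiag_aux : ∀ (c : ℕ), ∀ (r : ℕ), c ≤ r → ∀ A : Matrix (Fin r) (Fin c) ℍ,
    ∃ (L : Matrix (Fin r) (Fin r) ℍ) (R : Matrix (Fin c) (Fin c) ℍ)
      (B : Matrix (Fin r) (Fin c) ℝ),
      L * Lᴴ = 1 ∧ Lᴴ * L = 1 ∧ R * Rᴴ = 1 ∧ Rᴴ * R = 1 ∧
      (∀ (i : Fin r) (j : Fin c), (i : ℕ) ≠ (j : ℕ) → (i : ℕ) ≠ (j : ℕ) + 1 → B i j = 0) ∧
      (∀ i j : Fin r, (j : ℕ) = 0 → L i j = if (i : ℕ) = 0 then 1 else 0) ∧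
      L * A * R = B.map (fun x : ℝ => ((x : ℝ) : ℍ)) := by
  intro c
  induction c with
  | zero =>
    intro r _ A
    refine ⟨1, 1, 0, by simp, by simp, by simp, by simp, fun i j => j.elim0, ?_, ?_⟩
    · intro i j hj
      simp only [one_apply, Fin.ext_iff, hj]
    · exact Matrix.ext fun i j => j.elim0
  | succ c ih =>
    intro r hcr A
    obtain ⟨r', rfl⟩ : ∃ r', r = r' + 1 := ⟨r - 1, by omega⟩
    have hcr' : c ≤ r' := by omega
    -- Step 1: clear the first row except its first entry.
    obtain ⟨R1, t, hR11, hR12, hR13⟩ := householder_row (A 0)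
    set A1 : Matrix (Fin (r'+1)) (Fin (c+1)) ℍ := A * R1 with hA1def
    have hA1row : ∀ j : Fin (c+1), A1 0 j = if (j : ℕ) = 0 then ((t:ℝ):ℍ) else 0 := by
      intro j
      have h := congrFun hR13 j
      simpa [hA1def, mul_apply, vecMul, dotProduct] using h
    -- Step 2: clear the first column below the second entry.
    obtain ⟨U, s, hU1, hU2, hU3⟩ := householder_col (fun i : Fin r' => A1 i.succ 0)
    set A2 : Matrix (Fin (r'+1)) (Fin (c+1)) ℍ := embed1 U * A1 with hA2def
    have hA2row : ∀ j : Fin (c+1), A2 0 j = if (j : ℕ) = 0 then ((t:ℝ):ℍ) else 0 := by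
      intro j; rw [hA2def, mul_embed1_left_zero]; exact hA1row j
    have hA2col : ∀ i : Fin r', A2 i.succ 0 = if (i : ℕ) = 0 then ((s:ℝ):ℍ) else 0 := by
      intro i
      have h := congrFun hU3 i
      rw [hA2def, mul_embed1_left_succ]
      simpa [mulVec, dotProduct] using h
    -- Step 3: recurse on the submatrix.
    set M : Matrix (Fin r') (Fin c) ℍ := Matrix.of fun i j => A2 i.succ j.succ with hMdef
    obtain ⟨L2, R2, B2, hL21, hL22, hR21, hR22, hB2, hL2col, hEq2⟩ := ih r' hcr' M
    -- Assemble.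
    have hL1a : embed1 U * (embed1 U)ᴴ = 1 := by
      rw [embed1_conjTranspose, embed1_mul, hU1, embed1_one]
    have hL1b : (embed1 U)ᴴ * embed1 U = 1 := by
      rw [embed1_conjTranspose, embed1_mul, hU2, embed1_one]
    have hE2a : embed1 L2 * (embed1 L2)ᴴ = 1 := by
      rw [embed1_conjTranspose, embed1_mul, hL21, embed1_one]
    have hE2b : (embed1 L2)ᴴ * embed1 L2 = 1 := by
      rw [embed1_conjTranspose, embed1_mul, hL22, embed1_one]
    have hE3a : embed1 R2 * (embed1 R2)ᴴ = 1 := by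
      rw [embed1_conjTranspose, embed1_mul, hR21, embed1_one]
    have hE3b : (embed1 R2)ᴴ * embed1 R2 = 1 := by
      rw [embed1_conjTranspose, embed1_mul, hR22, embed1_one]
    refine ⟨embed1 L2 * embed1 U, R1 * embed1 R2,
      Matrix.of fun i j =>
        Fin.cases (Fin.cases t (fun i' => if (i' : ℕ) = 0 then s else 0) i)
          (fun j' => Fin.cases 0 (fun i' => B2 i' j') i) j,
      ?_, ?_, ?_, ?_, ?_, ?_, ?_⟩
    · rw [conjTranspose_mul, mul_assoc, ← mul_assoc (embed1 U), hL1a, one_mul, hE2a]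
    · rw [conjTranspose_mul, mul_assoc, ← mul_assoc (embed1 L2)ᴴ, hE2b, one_mul, hL1b]
    · rw [conjTranspose_mul, mul_assoc, ← mul_assoc (embed1 R2), hE3a, one_mul, hR11]
    · rw [conjTranspose_mul, mul_assoc, ← mul_assoc R1ᴴ, hR12, one_mul, hE3b]
    · -- lower bidiagonal
      intro i j hij hij1
      rcases Fin.eq_zero_or_eq_succ j with rfl | ⟨j', rfl⟩ <;>
        rcases Fin.eq_zero_or_eq_succ i with rfl | ⟨i', rfl⟩
      · exact absurd rfl hij
      · simp only [Matrix.of_apply, Fin.cases_zero, Fin.cases_succ]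
        rw [if_neg]
        intro h
        exact hij1 (by simp [h])
      · simp only [Matrix.of_apply, Fin.cases_zero, Fin.cases_succ]
      · simp only [Matrix.of_apply, Fin.cases_succ]
        refine hB2 i' j' ?_ ?_ <;> simp only [Fin.val_succ] at hij hij1 ⊢ <;> omega
    · -- column condition for L
      intro i j hj
      have hj0 : j = 0 := Fin.ext (by simpa using hj)
      subst hj0
      have h1 : (embed1 L2 * embed1 U) i 0 = embed1 L2 i 0 :=
        mul_embed1_right_zero U (embed1 L2) i
      rw [h1]
      rcases Fin.eq_zero_or_eq_succ i with rfl | ⟨i', rfl⟩ <;> simp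
    · -- the product equality
      have hassoc : embed1 L2 * embed1 U * A * (R1 * embed1 R2)
          = embed1 L2 * A2 * embed1 R2 := by
        simp only [hA2def, hA1def, Matrix.mul_assoc]
      rw [hassoc]
      refine Matrix.ext fun i j => ?_
      rcases Fin.eq_zero_or_eq_succ j with rfl | ⟨j', rfl⟩ <;>
        rcases Fin.eq_zero_or_eq_succ i with rfl | ⟨i', rfl⟩
      · -- (0,0)
        rw [mul_embed1_right_zero, mul_embed1_left_zero, hA2row 0]
        simp [Matrix.map_apply]
      · -- (i'+1, 0)
        rw [mul_embed1_right_zero, mul_embed1_left_succ]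
        have hr'pos : 0 < r' := i'.pos
        have hterm : ∀ k : Fin r', L2 i' k * A2 k.succ 0
            = if k = ⟨0, hr'pos⟩ then (if (i' : ℕ) = 0 then ((s:ℝ):ℍ) else 0) else 0 := by
          intro k
          rw [hA2col k]
          by_cases hk : k = ⟨0, hr'pos⟩
          · subst hk
            rw [if_pos rfl, if_pos rfl, hL2col i' ⟨0, hr'pos⟩ rfl]
            split_ifs <;> simp
          · rw [if_neg (fun h => hk (Fin.ext h)), if_neg hk, mul_zero]
        rw [Finset.sum_congr rfl (fun k _ => hterm k)]
        rw [Finset.sum_ite_eq' Finset.univ (⟨0, hr'pos⟩ : Fin r')]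
        simp only [Finset.mem_univ, if_true, Matrix.map_apply, Matrix.of_apply,
          Fin.cases_succ, Fin.cases_zero]
        split_ifs <;> simp
      · -- (0, j'+1)
        rw [mul_embed1_right_succ]
        have hterm : ∀ k : Fin c, (embed1 L2 * A2) 0 k.succ = 0 := by
          intro k
          rw [mul_embed1_left_zero, hA2row k.succ]
          simp
        simp only [hterm, zero_mul, Finset.sum_const_zero, Matrix.map_apply,
          Matrix.of_apply, Fin.cases_succ, Fin.cases_zero]
        simp
      · -- (i'+1, j'+1)
        have key : ∀ k : Fin c, (embed1 L2 * A2) i'.succ k.succ = (L2 * M) i' k := by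
          intro k
          rw [mul_embed1_left_succ, mul_apply]
          rfl
        calc (embed1 L2 * A2 * embed1 R2) i'.succ j'.succ
            = ∑ k, (embed1 L2 * A2) i'.succ k.succ * R2 k j' :=
              mul_embed1_right_succ _ _ _ _
          _ = ∑ k, (L2 * M) i' k * R2 k j' :=
              Finset.sum_congr rfl fun k _ => by rw [key k]
          _ = (L2 * M * R2) i' j' := (mul_apply).symm
          _ = (B2.map (fun x : ℝ => ((x : ℝ) : ℍ))) i' j' := by rw [hEq2]
          _ = _ := by simp [Matrix.map_apply]

end


/-- **Real lower-bidiagonalization of a quaternion matrix** (Theorem 3 of the paper,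
case `c ≤ r`): every `r × c` quaternion matrix `A` with `c ≤ r` can be transformed by
unitary quaternion matrices `L` and `R` into a *real* lower bidiagonal matrix `B`, i.e.
`L A R = B`. -/
theorem quaternion_lower_bidiagonalization (r c : ℕ) (hcr : c ≤ r)
    (A : Matrix (Fin r) (Fin c) (Quaternion ℝ)) :
    ∃ (L : Matrix (Fin r) (Fin r) (Quaternion ℝ))
      (R : Matrix (Fin c) (Fin c) (Quaternion ℝ))
      (B : Matrix (Fin r) (Fin c) ℝ),
      L * Lᴴ = 1 ∧ Lᴴ * L = 1 ∧ R * Rᴴ = 1 ∧ Rᴴ * R = 1 ∧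
      (∀ (i : Fin r) (j : Fin c), (i : ℕ) ≠ (j : ℕ) → (i : ℕ) ≠ (j : ℕ) + 1 → B i j = 0) ∧
      L * A * R = B.map (fun x : ℝ => ((x : ℝ) : Quaternion ℝ)) := by
  obtain ⟨L, R, B, h1, h2, h3, h4, h5, _, h7⟩ := bidiag_aux c r hcr A
  exact ⟨L, R, B, h1, h2, h3, h4, h5, h7⟩

end Aux
end

section
/- Every r × c quaternion matrix A admits a singular value decomposition: there exist a unitary quaternion matrix U ∈ ℍ^{r×r}, a unitary quaternion matrix V ∈ ℍ^{c×c}, and a real matrix Σ ∈ ℝ^{r×c} with Σ i j = 0 whenever i ≠ j (as natural-number indices) and Σ i i ≥ 0 for all i, such that A = U * (entrywise coercion of Σ) * Vᴴ. -/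
open Matrix

noncomputable section
namespace QSVD

local notation "ℍ" => Quaternion ℝ

def qinner {n : ℕ} (x y : Fin n → ℍ) : ℍ := ∑ i, star (x i) * y i
def nsq {n : ℕ} (x : Fin n → ℍ) : ℝ := ∑ i, Quaternion.normSq (x i)

lemma inner_self {n : ℕ} (x : Fin n → ℍ) : qinner x x = ((nsq x : ℝ) : ℍ) := by
  simp only [qinner, nsq, Quaternion.star_mul_self]
  rw [show ((↑(∑ i : Fin n, Quaternion.normSq (x i)) : ℍ)) = algebraMap ℝ ℍ (∑ i, Quaternion.normSq (x i)) from rfl, map_sum]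
  rfl

lemma nsq_nonneg {n : ℕ} (x : Fin n → ℍ) : 0 ≤ nsq x :=
  Finset.sum_nonneg fun i _ => Quaternion.normSq_nonneg

lemma nsq_eq_zero {n : ℕ} {x : Fin n → ℍ} (h : nsq x = 0) : x = 0 := by
  funext i
  have := (Finset.sum_eq_zero_iff_of_nonneg (fun i _ => Quaternion.normSq_nonneg)).1 h i (Finset.mem_univ i)
  simpa [Quaternion.normSq_eq_zero] using this

lemma nsq_re {n : ℕ} (x : Fin n → ℍ) : (qinner x x).re = nsq x := by
  rw [inner_self]; simp

lemma qinner_add_left {n : ℕ} (x y z : Fin n → ℍ) :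
    qinner (x + y) z = qinner x z + qinner y z := by
  simp [qinner, add_mul, Finset.sum_add_distrib]

lemma qinner_add_right {n : ℕ} (x y z : Fin n → ℍ) :
    qinner x (y + z) = qinner x y + qinner x z := by
  simp [qinner, mul_add, Finset.sum_add_distrib]

lemma qinner_star {n : ℕ} (x y : Fin n → ℍ) : qinner y x = star (qinner x y) := by
  simp [qinner, star_sum]

lemma qinner_smul_right {n : ℕ} (t : ℝ) (x y : Fin n → ℍ) :
    qinner x (t • y) = t • qinner x y := by
  simp [qinner, Finset.smul_sum, mul_smul_comm]

lemma qinner_smul_left {n : ℕ} (t : ℝ) (x y : Fin n → ℍ) :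
    qinner (t • x) y = t • qinner x y := by
  simp [qinner, Finset.smul_sum, smul_mul_assoc]

lemma qinner_mul_right {n : ℕ} (x y : Fin n → ℍ) (q : ℍ) :
    qinner x (fun i => y i * q) = qinner x y * q := by
  simp [qinner, Finset.sum_mul, mul_assoc]

lemma nsq_add {n : ℕ} (x y : Fin n → ℍ) :
    nsq (x + y) = nsq x + 2 * (qinner x y).re + nsq y := by
  rw [← nsq_re, qinner_add_left, qinner_add_right, qinner_add_right, ← nsq_re x, ← nsq_re y]
  have : (qinner y x).re = (qinner x y).re := by rw [qinner_star]; simp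
  simp [this]; ring

lemma nsq_smul {n : ℕ} (t : ℝ) (x : Fin n → ℍ) : nsq (t • x) = t ^ 2 * nsq x := by
  rw [← nsq_re, qinner_smul_left, qinner_smul_right, ← nsq_re x]
  simp [smul_smul, Quaternion.re_smul, sq, smul_eq_mul]


lemma mulVec_rsmul {r c : ℕ} (A : Matrix (Fin r) (Fin c) ℍ) (t : ℝ) (x : Fin c → ℍ) :
    A.mulVec (t • x) = t • A.mulVec x := by
  funext i
  simp [Matrix.mulVec, dotProduct, Finset.smul_sum, mul_smul_comm]

lemma mulVec_mul_right {r c : ℕ} (A : Matrix (Fin r) (Fin c) ℍ) (x : Fin c → ℍ) (q : ℍ) :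
    A.mulVec (fun j => x j * q) = fun i => A.mulVec x i * q := by
  funext i
  simp [Matrix.mulVec, dotProduct, Finset.sum_mul, mul_assoc]

/-- key: a quadratic inequality valid for all real t forces linear coeff zero -/
lemma linear_coeff_zero {C K : ℝ} (h : ∀ t : ℝ, 2 * t * C ≤ t ^ 2 * K) : C = 0 := by
  by_contra hC
  set a : ℝ := |K| + 1 with ha
  have h2 : (0:ℝ) < a := by positivity
  have h1 := h (C / a)
  have h3 : K ≤ |K| := le_abs_self K
  have hC2 : 0 < C ^ 2 := by positivity
  have hne : a ≠ 0 := ne_of_gt h2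
  have h5 : 2 * C ^ 2 * a ≤ C ^ 2 * K := by
    have h4 := mul_le_mul_of_nonneg_right h1 (le_of_lt (by positivity : (0:ℝ) < a ^ 2))
    calc 2 * C ^ 2 * a = 2 * (C / a) * C * a ^ 2 := by field_simp
      _ ≤ (C / a) ^ 2 * K * a ^ 2 := h4
      _ = C ^ 2 * K := by
          rw [div_pow, div_mul_eq_mul_div, div_mul_cancel₀ _ (by positivity : a ^ 2 ≠ 0)]
  nlinarith [mul_lt_mul_of_pos_left h2 hC2]

lemma ortho {r c : ℕ} (A : Matrix (Fin r) (Fin c) ℍ) (v : Fin c → ℍ) (hv : nsq v = 1)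
    (hmax : ∀ z, nsq z = 1 → nsq (A.mulVec z) ≤ nsq (A.mulVec v))
    (w : Fin c → ℍ) (hw : qinner v w = 0) :
    qinner (A.mulVec v) (A.mulVec w) = 0 := by
  -- general form of maximality
  have hmax' : ∀ z, nsq (A.mulVec z) ≤ nsq (A.mulVec v) * nsq z := by
    intro z
    by_cases hz : nsq z = 0
    · rw [nsq_eq_zero hz]
      simp [Matrix.mulVec_zero, nsq, hz]
    · have hzpos : 0 < nsq z := lt_of_le_of_ne (nsq_nonneg z) (Ne.symm hz)
      set s : ℝ := (Real.sqrt (nsq z))⁻¹ with hs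
      have hsq : s ^ 2 = (nsq z)⁻¹ := by
        rw [hs, ← Real.sqrt_inv]
        exact Real.sq_sqrt (by positivity)
      have h1 : nsq (s • z) = 1 := by
        rw [nsq_smul, hsq]
        field_simp
      have h2 := hmax _ h1
      rw [mulVec_rsmul, nsq_smul, hsq] at h2
      calc nsq (A.mulVec z) = nsq z * ((nsq z)⁻¹ * nsq (A.mulVec z)) := by field_simp
        _ ≤ nsq z * nsq (A.mulVec v) := by
            apply mul_le_mul_of_nonneg_left h2 (le_of_lt hzpos)
        _ = nsq (A.mulVec v) * nsq z := mul_comm _ _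
  -- for every quaternion q, the real part of qinner (Av) (Aw)*q vanishes
  have key : ∀ q : ℍ, ((qinner (A.mulVec v) (A.mulVec w)) * q).re = 0 := by
    intro q
    set u : Fin c → ℍ := fun i => w i * q with hu
    have hvu : qinner v u = 0 := by rw [hu, qinner_mul_right, hw, zero_mul]
    have hAu : A.mulVec u = fun i => A.mulVec w i * q := mulVec_mul_right A w q
    have hqq : qinner (A.mulVec v) (A.mulVec u) = qinner (A.mulVec v) (A.mulVec w) * q := by
      rw [hAu, qinner_mul_right]
    apply linear_coeff_zero (K := nsq (A.mulVec v) * nsq u - nsq (A.mulVec u))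
    intro t
    have h3 := hmax' (v + t • u)
    rw [Matrix.mulVec_add, mulVec_rsmul, nsq_add, nsq_add, nsq_smul, nsq_smul,
      qinner_smul_right, qinner_smul_right, hv, hvu, hqq] at h3
    simp only [Quaternion.re_smul, smul_eq_mul, Quaternion.re_zero, mul_zero] at h3
    nlinarith [h3]
  have := key (star (qinner (A.mulVec v) (A.mulVec w)))
  rw [Quaternion.self_mul_star] at this
  have : Quaternion.normSq (qinner (A.mulVec v) (A.mulVec w)) = 0 := by
    simpa using this
  exact Quaternion.normSq_eq_zero.1 this


lemma nsq_continuous {n : ℕ} : Continuous (fun x : Fin n → ℍ => nsq x) := by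
  unfold nsq
  simp only [Quaternion.normSq_eq_norm_mul_self]
  exact continuous_finset_sum _ fun i _ =>
    ((continuous_apply i).norm.mul (continuous_apply i).norm)

lemma mulVec_continuous {r c : ℕ} (A : Matrix (Fin r) (Fin c) ℍ) :
    Continuous (fun x : Fin c → ℍ => A.mulVec x) := by
  apply continuous_pi
  intro i
  simp only [Matrix.mulVec, dotProduct]
  exact continuous_finset_sum _ fun j _ => continuous_const.mul (continuous_apply j)

lemma nsq_single_one {n : ℕ} (i0 : Fin (n+1)) : nsq (Pi.single i0 (1:ℍ)) = 1 := by
  unfold nsq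
  rw [Finset.sum_eq_single i0]
  · simp
  · intro b _ hb
    simp [Pi.single_apply, hb]
  · simp

lemma exists_max {r c : ℕ} (A : Matrix (Fin r) (Fin (c+1)) ℍ) :
    ∃ v, nsq v = 1 ∧ ∀ z, nsq z = 1 → nsq (A.mulVec z) ≤ nsq (A.mulVec v) := by
  set S : Set (Fin (c+1) → ℍ) := {x | nsq x = 1} with hS
  have hclosed : IsClosed S := isClosed_eq nsq_continuous continuous_const
  have hbdd : Bornology.IsBounded S := by
    apply (Metric.isBounded_closedBall (x := (0 : Fin (c+1) → ℍ)) (r := 1)).subset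
    intro x hx
    rw [Metric.mem_closedBall, dist_zero_right]
    rw [pi_norm_le_iff_of_nonneg (by norm_num)]
    intro i
    have h1 : Quaternion.normSq (x i) ≤ 1 := by
      have := Finset.single_le_sum (f := fun j => Quaternion.normSq (x j))
        (fun j _ => Quaternion.normSq_nonneg) (Finset.mem_univ i)
      rw [show (∑ j, Quaternion.normSq (x j)) = nsq x from rfl, hx] at this
      exact this
    rw [Quaternion.normSq_eq_norm_mul_self] at h1
    nlinarith [norm_nonneg (x i)]
  have hcpt : IsCompact S := Metric.isCompact_of_isClosed_isBounded hclosed hbdd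
  have hne : S.Nonempty := ⟨Pi.single 0 1, nsq_single_one 0⟩
  obtain ⟨v, hvS, hvmax⟩ := hcpt.exists_isMaxOn hne
    ((nsq_continuous.comp (mulVec_continuous A)).continuousOn)
  exact ⟨v, hvS, fun z hz => hvmax hz⟩


lemma qinner_sub_left {n : ℕ} (x y z : Fin n → ℍ) :
    qinner (x - y) z = qinner x z - qinner y z := by
  simp [qinner, sub_mul, Finset.sum_sub_distrib]

lemma qinner_sub_right {n : ℕ} (x y z : Fin n → ℍ) :
    qinner x (y - z) = qinner x y - qinner x z := by
  simp [qinner, mul_sub, Finset.sum_sub_distrib]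

lemma qinner_single_right {n : ℕ} (x : Fin n → ℍ) (i0 : Fin n) (q : ℍ) :
    qinner x (Pi.single i0 q) = star (x i0) * q := by
  unfold qinner
  rw [Finset.sum_eq_single i0]
  · simp
  · intro b _ hb; simp [Pi.single_apply, hb]
  · simp

lemma houseWW {n : ℕ} (w : Fin n → ℍ) (t : ℝ) (hww : qinner w w = t • (1:ℍ)) :
    (Matrix.of fun i j => w i * star (w j)) * (Matrix.of fun i j => w i * star (w j))
      = t • Matrix.of fun i j => w i * star (w j) := by
  funext i j
  rw [Matrix.mul_apply, Matrix.smul_apply]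
  have h2 : (∑ k, (Matrix.of fun i j => w i * star (w j)) i k *
      (Matrix.of fun i j => w i * star (w j)) k j)
      = ∑ k, w i * ((star (w k) * w k) * star (w j)) :=
    Finset.sum_congr rfl fun k _ => by simp only [Matrix.of_apply, mul_assoc]
  rw [h2, ← Finset.mul_sum, ← Finset.sum_mul]
  rw [show (∑ k, star (w k) * w k) = qinner w w from rfl, hww]
  simp only [Matrix.of_apply, smul_mul_assoc, one_mul, mul_smul_comm]

lemma houseHerm {n : ℕ} (w : Fin n → ℍ) (s : ℝ) :
    ((1 : Matrix (Fin n) (Fin n) ℍ) - s • Matrix.of fun i j => w i * star (w j))ᴴ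
      = (1 : Matrix (Fin n) (Fin n) ℍ) - s • Matrix.of fun i j => w i * star (w j) := by
  funext i j
  have hij' : (i = j) ↔ (j = i) := eq_comm
  simp only [Matrix.conjTranspose_apply, Matrix.sub_apply, Matrix.smul_apply,
    Matrix.one_apply, Matrix.of_apply, star_sub, Quaternion.star_smul,
    star_star, apply_ite (star : ℍ → ℍ), star_one, star_zero, hij', StarMul.star_mul]

lemma houseUnit {n : ℕ} (w : Fin n → ℍ) (t s : ℝ) (hww : qinner w w = t • (1:ℍ))
    (hst : s * s * t = 2 * s) :
    ((1 : Matrix (Fin n) (Fin n) ℍ) - s • Matrix.of fun i j => w i * star (w j)) *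
      ((1 : Matrix (Fin n) (Fin n) ℍ) - s • Matrix.of fun i j => w i * star (w j)) = 1 := by
  set W : Matrix (Fin n) (Fin n) ℍ := Matrix.of fun i j => w i * star (w j) with hWdef
  have hWW : W * W = t • W := houseWW w t hww
  have hexp : (1 - s • W) * (1 - s • W) = 1 - s • W - s • W + (s * s * t) • W := by
    rw [mul_sub, mul_one, sub_mul, one_mul, smul_mul_assoc, mul_smul_comm, hWW,
      smul_smul, smul_smul]
    abel
  rw [hexp, hst, two_mul, add_smul]
  abel

set_option maxHeartbeats 1000000 in
lemma exists_unitary_col {n : ℕ} (v : Fin (n+1) → ℍ) (hv : nsq v = 1) :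
    ∃ M : Matrix (Fin (n+1)) (Fin (n+1)) ℍ,
      M * Mᴴ = 1 ∧ Mᴴ * M = 1 ∧ ∀ i, M i 0 = v i := by
  classical
  set a : ℝ := ‖v 0‖ with hadef
  have ha : 0 ≤ a := by rw [hadef]; exact norm_nonneg _
  set μ : ℍ := if v 0 = 0 then -1 else -(a⁻¹ • v 0) with hμdef
  have hμn : Quaternion.normSq μ = 1 := by
    rw [hμdef]
    split_ifs with h
    · simp
    · have hane : a ≠ 0 := by rw [hadef]; exact norm_ne_zero_iff.2 h
      rw [Quaternion.normSq_neg, Quaternion.normSq_smul,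
        Quaternion.normSq_eq_norm_mul_self, ← hadef]
      field_simp
  have key2 : star μ * μ = 1 := by
    rw [Quaternion.star_mul_self, hμn]; simp
  have key3 : μ * star μ = 1 := by
    rw [Quaternion.self_mul_star, hμn]; simp
  have key1 : v 0 = -(a • μ) := by
    rw [hμdef]
    split_ifs with h
    · simp [h, hadef]
    · have hane : a ≠ 0 := by rw [hadef]; exact norm_ne_zero_iff.2 h
      rw [smul_neg, neg_neg, smul_smul, mul_inv_cancel₀ hane, one_smul]
  set e : Fin (n+1) → ℍ := Pi.single 0 μ with hedef
  set w : Fin (n+1) → ℍ := v - e with hwdef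
  have he0 : e 0 = μ := by rw [hedef]; exact Pi.single_eq_same _ _
  have hw0 : w 0 = -((a + 1) • μ) := by
    show v 0 - e 0 = _
    rw [he0, key1, add_smul, one_smul, neg_add, sub_eq_add_neg]
  have hsw0 : star (w 0) = -((a + 1) • star μ) := by
    rw [hw0, star_neg, Quaternion.star_smul]
  set t : ℝ := 2 + 2 * a with htdef
  have ht : 0 < t := by rw [htdef]; linarith
  have htne : t ≠ 0 := ne_of_gt ht
  have hve : qinner v e = -(a • (1:ℍ)) := by
    rw [hedef, qinner_single_right, key1, star_neg, Quaternion.star_smul, neg_mul,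
      smul_mul_assoc, key2]
  have hev : qinner e v = -(a • (1:ℍ)) := by
    rw [qinner_star, hve, star_neg, Quaternion.star_smul, star_one]
  have hee : qinner e e = 1 := by
    rw [hedef, qinner_single_right, Pi.single_eq_same, key2]
  have hvv : qinner v v = 1 := by
    rw [inner_self, hv]; simp
  have hww : qinner w w = t • (1:ℍ) := by
    rw [hwdef, qinner_sub_left, qinner_sub_right, qinner_sub_right, hvv, hve, hev, hee,
      htdef]
    module
  set s : ℝ := 2 / t with hsdef
  set W : Matrix (Fin (n+1)) (Fin (n+1)) ℍ := Matrix.of (fun i j => w i * star (w j)) with hWdef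
  set H : Matrix (Fin (n+1)) (Fin (n+1)) ℍ := 1 - s • W with hHdef
  have hHH : Hᴴ = H := by
    rw [hHdef]; exact houseHerm w s
  have hst : s * s * t = 2 * s := by
    rw [hsdef]
    field_simp
  have hHunit : H * H = 1 := by
    rw [hHdef]; exact houseUnit w t s hww hst
  have hfac : s * (a + 1) = 1 := by
    rw [hsdef, htdef]
    field_simp
    ring
  have hcolH : ∀ i, H i 0 = v i * star μ := by
    intro i
    have hH0 : H i 0 = (1 : Matrix (Fin (n+1)) (Fin (n+1)) ℍ) i 0 - s • (w i * star (w 0)) := by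
      rw [hHdef]; simp [hWdef]
    rw [hH0, hsw0, mul_neg, mul_smul_comm, smul_neg, smul_smul, hfac, one_smul,
      sub_neg_eq_add]
    have hwi : w i = v i - e i := rfl
    rw [hwi, sub_mul]
    by_cases hi : i = 0
    · subst hi
      rw [he0, key3]
      simp [Matrix.one_apply]
    · rw [hedef, Pi.single_eq_of_ne hi]
      simp [Matrix.one_apply, hi]
  set D : Matrix (Fin (n+1)) (Fin (n+1)) ℍ :=
    Matrix.diagonal (fun i => if i = 0 then μ else 1) with hDdef
  have hDD' : D * Dᴴ = 1 := by
    rw [hDdef, Matrix.diagonal_conjTranspose, Matrix.diagonal_mul_diagonal]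
    funext i j
    by_cases hij : i = j
    · subst hij
      by_cases hi : i = 0 <;>
        simp [Matrix.diagonal_apply_eq, Matrix.one_apply, Pi.star_apply, hi, key3]
    · simp [Matrix.diagonal_apply_ne _ hij, Matrix.one_apply, hij]
  have hD'D : Dᴴ * D = 1 := by
    rw [hDdef, Matrix.diagonal_conjTranspose, Matrix.diagonal_mul_diagonal]
    funext i j
    by_cases hij : i = j
    · subst hij
      by_cases hi : i = 0 <;>
        simp [Matrix.diagonal_apply_eq, Matrix.one_apply, Pi.star_apply, hi, key2]
    · simp [Matrix.diagonal_apply_ne _ hij, Matrix.one_apply, hij]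
  refine ⟨H * D, ?_, ?_, ?_⟩
  · rw [Matrix.conjTranspose_mul, hHH, ← Matrix.mul_assoc, Matrix.mul_assoc H D,
      hDD', Matrix.mul_one, hHunit]
  · rw [Matrix.conjTranspose_mul, hHH, Matrix.mul_assoc, ← Matrix.mul_assoc H H D,
      hHunit, Matrix.one_mul, hD'D]
  · intro i
    rw [Matrix.mul_apply]
    rw [Finset.sum_eq_single 0]
    · rw [hDdef, Matrix.diagonal_apply_eq, if_pos rfl, hcolH, mul_assoc, key2, mul_one]
    · intro b _ hb
      rw [hDdef, Matrix.diagonal_apply_ne _ hb, mul_zero]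
    · simp

section BlockDiag

variable {α : Type*}

def bd [Zero α] {r c : ℕ} (d : α) (M : Matrix (Fin r) (Fin c) α) :
    Matrix (Fin (r+1)) (Fin (c+1)) α :=
  Matrix.of fun i j =>
    Fin.cases (Fin.cases d (fun _ => 0) j) (fun i' => Fin.cases 0 (fun j' => M i' j') j) i

@[simp] lemma bd_zero_zero [Zero α] {r c : ℕ} (d : α) (M : Matrix (Fin r) (Fin c) α) :
    bd d M 0 0 = d := by simp [bd]

@[simp] lemma bd_zero_succ [Zero α] {r c : ℕ} (d : α) (M : Matrix (Fin r) (Fin c) α)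
    (j : Fin c) : bd d M 0 j.succ = 0 := by simp [bd]

@[simp] lemma bd_succ_zero [Zero α] {r c : ℕ} (d : α) (M : Matrix (Fin r) (Fin c) α)
    (i : Fin r) : bd d M i.succ 0 = 0 := by simp [bd]

@[simp] lemma bd_succ_succ [Zero α] {r c : ℕ} (d : α) (M : Matrix (Fin r) (Fin c) α)
    (i : Fin r) (j : Fin c) : bd d M i.succ j.succ = M i j := by simp [bd]

lemma bd_mul [NonUnitalNonAssocSemiring α] {r c k : ℕ} (d e : α)
    (M : Matrix (Fin r) (Fin c) α) (N : Matrix (Fin c) (Fin k) α) :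
    bd d M * bd e N = bd (d * e) (M * N) := by
  funext i j
  rw [Matrix.mul_apply, Fin.sum_univ_succ]
  induction i using Fin.cases with
  | zero =>
    induction j using Fin.cases with
    | zero => simp
    | succ j' => simp [Matrix.mul_apply]
  | succ i' =>
    induction j using Fin.cases with
    | zero => simp
    | succ j' => simp [Matrix.mul_apply]

lemma bd_conjTranspose {r c : ℕ} (d : ℍ) (M : Matrix (Fin r) (Fin c) ℍ) :
    (bd d M)ᴴ = bd (star d) Mᴴ := by
  funext i j
  induction i using Fin.cases with
  | zero =>
    induction j using Fin.cases with
    | zero => simp [Matrix.conjTranspose_apply]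
    | succ j' => simp [Matrix.conjTranspose_apply]
  | succ i' =>
    induction j using Fin.cases with
    | zero => simp [Matrix.conjTranspose_apply]
    | succ j' => simp [Matrix.conjTranspose_apply]

lemma bd_one [NonAssocSemiring α] {n : ℕ} :
    bd (1 : α) (1 : Matrix (Fin n) (Fin n) α) = 1 := by
  funext i j
  induction i using Fin.cases with
  | zero =>
    induction j using Fin.cases with
    | zero => simp [Matrix.one_apply]
    | succ j' => simp [Matrix.one_apply, (Fin.succ_ne_zero j').symm]
  | succ i' =>
    induction j using Fin.cases with
    | zero => simp [Matrix.one_apply, Fin.succ_ne_zero i']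
    | succ j' => simp [Matrix.one_apply, Fin.succ_inj]

lemma bd_map {r c : ℕ} (d : ℝ) (M : Matrix (Fin r) (Fin c) ℝ) :
    (bd d M).map (fun x : ℝ => ((x : ℝ) : ℍ)) = bd ((d : ℝ) : ℍ) (M.map (fun x : ℝ => ((x : ℝ) : ℍ))) := by
  funext i j
  induction i using Fin.cases with
  | zero =>
    induction j using Fin.cases with
    | zero => simp
    | succ j' => simp
  | succ i' =>
    induction j using Fin.cases with
    | zero => simp
    | succ j' => simp

end BlockDiag

lemma svd_of_eq_zero {r c : ℕ} (A : Matrix (Fin r) (Fin c) ℍ) (h : A = 0) :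
    ∃ (U : Matrix (Fin r) (Fin r) ℍ) (V : Matrix (Fin c) (Fin c) ℍ)
      (S : Matrix (Fin r) (Fin c) ℝ),
      U * Uᴴ = 1 ∧ Uᴴ * U = 1 ∧ V * Vᴴ = 1 ∧ Vᴴ * V = 1 ∧
      (∀ (i : Fin r) (j : Fin c), (i : ℕ) ≠ (j : ℕ) → S i j = 0) ∧
      (∀ (i : Fin r) (j : Fin c), (i : ℕ) = (j : ℕ) → 0 ≤ S i j) ∧
      A = U * S.map (fun x : ℝ => ((x : ℝ) : ℍ)) * Vᴴ := by
  refine ⟨1, 1, 0, by simp, by simp, by simp, by simp, fun i j _ => rfl,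
    fun i j _ => le_refl 0, ?_⟩
  subst h
  funext i j
  simp [Matrix.mul_apply]

set_option maxHeartbeats 1000000 in
theorem svd_aux (N : ℕ) : ∀ r c : ℕ, r + c ≤ N → ∀ A : Matrix (Fin r) (Fin c) ℍ,
    ∃ (U : Matrix (Fin r) (Fin r) ℍ) (V : Matrix (Fin c) (Fin c) ℍ)
      (S : Matrix (Fin r) (Fin c) ℝ),
      U * Uᴴ = 1 ∧ Uᴴ * U = 1 ∧ V * Vᴴ = 1 ∧ Vᴴ * V = 1 ∧
      (∀ (i : Fin r) (j : Fin c), (i : ℕ) ≠ (j : ℕ) → S i j = 0) ∧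
      (∀ (i : Fin r) (j : Fin c), (i : ℕ) = (j : ℕ) → 0 ≤ S i j) ∧
      A = U * S.map (fun x : ℝ => ((x : ℝ) : ℍ)) * Vᴴ := by
  induction N with
  | zero =>
    intro r c hrc A
    exact svd_of_eq_zero A (by funext i j; exact absurd i.2 (by omega))
  | succ N ih =>
    intro r c hrc
    cases r with
    | zero =>
      intro A
      exact svd_of_eq_zero A (by funext i j; exact i.elim0)
    | succ r' =>
      cases c with
      | zero =>
        intro A
        exact svd_of_eq_zero A (by funext i j; exact j.elim0)
      | succ c' =>
        intro A
        by_cases hA : A = 0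
        · exact svd_of_eq_zero A hA
        -- find the top singular vector
        obtain ⟨v, hv1, hvmax⟩ := exists_max A
        have hentry : ∃ i j, A i j ≠ 0 := by
          by_contra h
          push_neg at h
          exact hA (by funext i j; exact h i j)
        obtain ⟨i0, j0, hij0⟩ := hentry
        have hfv : 0 < nsq (A.mulVec v) := by
          have h1 : A.mulVec (Pi.single j0 1) = fun i => A i j0 := by
            funext i
            rw [Matrix.mulVec_single]
            simp
          have h2 : 0 < nsq (A.mulVec (Pi.single j0 1)) := by
            rw [h1]
            have h3 : Quaternion.normSq (A i0 j0) ≤ nsq (fun i => A i j0) :=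
              Finset.single_le_sum (f := fun i => Quaternion.normSq (A i j0))
                (fun i _ => Quaternion.normSq_nonneg) (Finset.mem_univ i0)
            have h4 : 0 < Quaternion.normSq (A i0 j0) :=
              lt_of_le_of_ne Quaternion.normSq_nonneg
                (Ne.symm (Quaternion.normSq_ne_zero.2 hij0))
            linarith
          exact lt_of_lt_of_le h2 (hvmax _ (nsq_single_one j0))
        set σ : ℝ := Real.sqrt (nsq (A.mulVec v)) with hσdef
        have hσ : 0 < σ := Real.sqrt_pos.2 hfv
        have hσ2 : σ ^ 2 = nsq (A.mulVec v) := Real.sq_sqrt (le_of_lt hfv)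
        set u : Fin (r'+1) → ℍ := σ⁻¹ • A.mulVec v with hudef
        have hAv : A.mulVec v = σ • u := by
          rw [hudef, smul_smul, mul_inv_cancel₀ (ne_of_gt hσ), one_smul]
        have hu1 : nsq u = 1 := by
          rw [hudef, nsq_smul, ← hσ2]
          field_simp
        obtain ⟨U₁, hU₁a, hU₁b, hU₁col⟩ := exists_unitary_col u hu1
        obtain ⟨V₁, hV₁a, hV₁b, hV₁col⟩ := exists_unitary_col v hv1
        set B : Matrix (Fin (r'+1)) (Fin (c'+1)) ℍ := U₁ᴴ * (A * V₁) with hBdef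
        have hAV₁ : ∀ k, (A * V₁) k 0 = σ • u k := by
          intro k
          rw [Matrix.mul_apply]
          have : ∀ j, A k j * V₁ j 0 = A k j * v j := fun j => by rw [hV₁col j]
          rw [Finset.sum_congr rfl fun j _ => this j]
          rw [show (∑ j, A k j * v j) = A.mulVec v k from rfl, hAv]
          rfl
        have hBcol : ∀ i, B i 0 = σ • ((1 : Matrix (Fin (r'+1)) (Fin (r'+1)) ℍ) i 0) := by
          intro i
          rw [hBdef, Matrix.mul_apply]
          have h1 : ∀ k, U₁ᴴ i k * (A * V₁) k 0 = σ • (star (U₁ k i) * U₁ k 0) := by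
            intro k
            rw [Matrix.conjTranspose_apply, hAV₁ k, hU₁col k, mul_smul_comm]
          rw [Finset.sum_congr rfl fun k _ => h1 k, ← Finset.smul_sum]
          congr 1
          rw [← hU₁b, Matrix.mul_apply]
          exact Finset.sum_congr rfl fun k _ => by rw [Matrix.conjTranspose_apply]
        have hBrow : ∀ j' : Fin c', B 0 j'.succ = 0 := by
          intro j'
          have hwv : qinner v (fun l => V₁ l j'.succ) = 0 := by
            have h1 : (V₁ᴴ * V₁) 0 j'.succ = 0 := by
              rw [hV₁b, Matrix.one_apply_ne (Fin.succ_ne_zero j').symm]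
            rw [← h1, Matrix.mul_apply]
            exact Finset.sum_congr rfl fun k _ => by
              rw [Matrix.conjTranspose_apply, hV₁col k]
          have horth := ortho A v hv1 hvmax (fun l => V₁ l j'.succ) hwv
          rw [hBdef, Matrix.mul_apply]
          have h2 : ∀ k, U₁ᴴ 0 k * (A * V₁) k j'.succ
              = σ⁻¹ • (star (A.mulVec v k) * (A.mulVec (fun l => V₁ l j'.succ)) k) := by
            intro k
            rw [Matrix.conjTranspose_apply, hU₁col k, hudef]
            have : (A * V₁) k j'.succ = (A.mulVec (fun l => V₁ l j'.succ)) k := by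
              rw [Matrix.mul_apply]
              rfl
            rw [this, Pi.smul_apply, Quaternion.star_smul, smul_mul_assoc]
          rw [Finset.sum_congr rfl fun k _ => h2 k, ← Finset.smul_sum]
          rw [show (∑ k, star (A.mulVec v k) * (A.mulVec (fun l => V₁ l j'.succ)) k)
            = qinner (A.mulVec v) (A.mulVec (fun l => V₁ l j'.succ)) from rfl, horth,
            smul_zero]
        set A' : Matrix (Fin r') (Fin c') ℍ := Matrix.of (fun i j => B i.succ j.succ)
          with hA'def
        have hB : B = bd ((σ : ℝ) : ℍ) A' := by
          have hcoe : ((σ : ℝ) : ℍ) = σ • (1 : ℍ) := by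
            rw [show ((σ : ℝ) : ℍ) = algebraMap ℝ ℍ σ from rfl,
              Algebra.algebraMap_eq_smul_one]
          funext i j
          induction i using Fin.cases with
          | zero =>
            induction j using Fin.cases with
            | zero =>
              rw [hBcol 0, bd_zero_zero, Matrix.one_apply_eq, hcoe]
            | succ j' => rw [hBrow j', bd_zero_succ]
          | succ i' =>
            induction j using Fin.cases with
            | zero =>
              rw [hBcol i'.succ, bd_succ_zero,
                Matrix.one_apply_ne (Fin.succ_ne_zero i'), smul_zero]
            | succ j' => rw [bd_succ_succ]; rfl
        obtain ⟨U', V', S', hU'1, hU'2, hV'1, hV'2, hSoff, hSnn, hA'eq⟩ :=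
          ih r' c' (by omega) A'
        refine ⟨U₁ * bd 1 U', V₁ * bd 1 V', bd σ S', ?_, ?_, ?_, ?_, ?_, ?_, ?_⟩
        · rw [Matrix.conjTranspose_mul, bd_conjTranspose, star_one, Matrix.mul_assoc,
            ← Matrix.mul_assoc (bd 1 U'), bd_mul, hU'1, one_mul, bd_one, Matrix.one_mul,
            hU₁a]
        · rw [Matrix.conjTranspose_mul, bd_conjTranspose, star_one, Matrix.mul_assoc,
            ← Matrix.mul_assoc U₁ᴴ, hU₁b, Matrix.one_mul, bd_mul, hU'2, one_mul, bd_one]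
        · rw [Matrix.conjTranspose_mul, bd_conjTranspose, star_one, Matrix.mul_assoc,
            ← Matrix.mul_assoc (bd 1 V'), bd_mul, hV'1, one_mul, bd_one, Matrix.one_mul,
            hV₁a]
        · rw [Matrix.conjTranspose_mul, bd_conjTranspose, star_one, Matrix.mul_assoc,
            ← Matrix.mul_assoc V₁ᴴ, hV₁b, Matrix.one_mul, bd_mul, hV'2, one_mul, bd_one]
        · intro i j hne
          induction i using Fin.cases with
          | zero =>
            induction j using Fin.cases with
            | zero => exact absurd rfl hne
            | succ j' => rw [bd_zero_succ]
          | succ i' =>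
            induction j using Fin.cases with
            | zero => rw [bd_succ_zero]
            | succ j' =>
              rw [bd_succ_succ]
              apply hSoff
              simpa [Fin.val_succ] using hne
        · intro i j heq
          induction i using Fin.cases with
          | zero =>
            induction j using Fin.cases with
            | zero => rw [bd_zero_zero]; exact Real.sqrt_nonneg _
            | succ j' => exact absurd heq (by simp [Fin.val_succ])
          | succ i' =>
            induction j using Fin.cases with
            | zero => exact absurd heq (by simp [Fin.val_succ])
            | succ j' =>
              rw [bd_succ_succ]
              apply hSnn
              simpa [Fin.val_succ] using heq
        · have hAB : A = U₁ * B * V₁ᴴ := by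
            rw [hBdef, ← Matrix.mul_assoc, ← Matrix.mul_assoc, hU₁a, Matrix.one_mul,
              Matrix.mul_assoc, hV₁a, Matrix.mul_one]
          have hmid : bd (1:ℍ) U' *
              (bd ((σ : ℝ) : ℍ) (S'.map (fun x : ℝ => ((x : ℝ) : ℍ))) * (bd (1:ℍ) V'ᴴ * V₁ᴴ))
              = bd ((σ : ℝ) : ℍ) A' * V₁ᴴ := by
            rw [← Matrix.mul_assoc (bd ((σ : ℝ) : ℍ) (S'.map (fun x : ℝ => ((x : ℝ) : ℍ)))),
              bd_mul, ← Matrix.mul_assoc (bd (1:ℍ) U'), bd_mul, one_mul, mul_one,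
              ← Matrix.mul_assoc U', ← hA'eq]
          rw [hAB, hB, bd_map, Matrix.conjTranspose_mul, bd_conjTranspose, star_one]
          simp only [Matrix.mul_assoc]
          rw [hmid]

end QSVD
end


/-- **Existence of the quaternion singular value decomposition**: every `r × c`
quaternion matrix `A` factors as `A = U Σ Vᴴ` with `U`, `V` unitary quaternion matrices
and `Σ` a real diagonal matrix with nonnegative diagonal entries. -/
theorem quaternion_svd_exists (r c : ℕ) (A : Matrix (Fin r) (Fin c) (Quaternion ℝ)) :
    ∃ (U : Matrix (Fin r) (Fin r) (Quaternion ℝ))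
      (V : Matrix (Fin c) (Fin c) (Quaternion ℝ))
      (S : Matrix (Fin r) (Fin c) ℝ),
      U * Uᴴ = 1 ∧ Uᴴ * U = 1 ∧ V * Vᴴ = 1 ∧ Vᴴ * V = 1 ∧
      (∀ (i : Fin r) (j : Fin c), (i : ℕ) ≠ (j : ℕ) → S i j = 0) ∧
      (∀ (i : Fin r) (j : Fin c), (i : ℕ) = (j : ℕ) → 0 ≤ S i j) ∧
      A = U * S.map (fun x : ℝ => ((x : ℝ) : Quaternion ℝ)) * Vᴴ := by
  exact QSVD.svd_aux (r + c) r c le_rfl A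
end
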